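/- arXiv:2411.06280 — 2 statements merged into one kernel-verified Lean document; each statement's English description precedes it below -/
import Mathlib

section
/- For every order ω on the Pascal-Bratteli diagram and every p ∈ (0,1), the set of ω-minimal infinite paths and the set of ω-maximal infinite paths both have ν_p-measure zero. -/
open MeasureTheory

/-- `S x n` is the number of `1`s (i.e. `true`s) among the first `n` coordinates of `x`. -/
def S (x : ℕ → Bool) (n : ℕ) : ℕ := ∑ k ∈ Finset.range n, if x k then 1 else 0

/-- The vertex of level `n` visited by the path `x`. -/
def vtx (x : ℕ → Bool) (n : ℕ) : ℕ × ℕ := (S x n, n - S x n)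

/-- `ν` is the Bernoulli product measure on `{0,1}^ℕ` with parameter `p`. -/
def IsBernoulli (p : ℝ) (ν : Measure (ℕ → Bool)) : Prop :=
  ∀ (n : ℕ) (w : ℕ → Bool),
    ν {x | ∀ k < n, x k = w k} =
      ENNReal.ofReal (p ^ (S w n) * (1 - p) ^ (n - S w n))

/-- The path `x` is minimal for the order `ω`. -/
def IsMinPath (ω : ℕ × ℕ → Bool) (x : ℕ → Bool) : Prop :=
  ∀ n : ℕ, S x (n + 1) = 0 ∨ (n + 1) - S x (n + 1) = 0 ∨ x n = ω (vtx x (n + 1))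

/-- The path `x` is maximal for the order `ω`. -/
def IsMaxPath (ω : ℕ × ℕ → Bool) (x : ℕ → Bool) : Prop :=
  ∀ n : ℕ, S x (n + 1) = 0 ∨ (n + 1) - S x (n + 1) = 0 ∨ x n = !ω (vtx x (n + 1))

/-!
Two ω-minimal paths that reach the same vertex of level `n` agree up to level `n`: if they
differed at the last step, they would enter that vertex through both of its incoming edges,
yet both edges would have to be minimal. Hence the minimal paths meet at most `n + 1`
cylinders of length `n`, each of `ν_p`-measure at most `max p (1 - p) ^ n`, and
`(n + 1) * max p (1 - p) ^ n → 0`. Maximal paths are the minimal paths of the reversed order.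
-/

open Filter Finset

lemma S_succ (x : ℕ → Bool) (n : ℕ) : S x (n + 1) = S x n + (if x n then 1 else 0) :=
  sum_range_succ _ n

lemma S_le (x : ℕ → Bool) (n : ℕ) : S x n ≤ n := by
  induction n with
  | zero => simp [S]
  | succ n ih => rw [S_succ]; split <;> omega

section MinPath

variable {ω : ℕ × ℕ → Bool} {x y : ℕ → Bool}

lemma IsMaxPath.isMinPath_not (h : IsMaxPath ω x) : IsMinPath (fun v => !ω v) x := h

lemma IsMinPath.apply_eq_of_S_succ_eq (hx : IsMinPath ω x) (hy : IsMinPath ω y) {n : ℕ}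
    (h : S x (n + 1) = S y (n + 1)) : x n = y n := by
  wlog hxy : x n = false ∧ y n = true generalizing x y
  · cases hxn : x n <;> cases hyn : y n
    · rfl
    · exact absurd ⟨hxn, hyn⟩ hxy
    · exact absurd (this hy hx h.symm ⟨hyn, hxn⟩) (by simp [hxn, hyn])
    · rfl
  obtain ⟨hxn, hyn⟩ := hxy
  have hSx : S x (n + 1) = S x n := by simp [S_succ, hxn]
  have hSy : S y (n + 1) = S y n + 1 := by simp [S_succ, hyn]
  have hxle := S_le x n
  -- the common vertex is entered by a `1`-step and by a `0`-step, so it is interior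
  have hpos : S x (n + 1) ≠ 0 := by omega
  have hlt : n + 1 - S x (n + 1) ≠ 0 := by omega
  have hωx : x n = ω (vtx x (n + 1)) := ((hx n).resolve_left hpos).resolve_left hlt
  have hωy : y n = ω (vtx y (n + 1)) :=
    ((hy n).resolve_left (h ▸ hpos)).resolve_left (h ▸ hlt)
  have hv : vtx x (n + 1) = vtx y (n + 1) := by simp [vtx, h]
  have := hωx.trans (hv ▸ hωy.symm)
  simp [hxn, hyn] at this

lemma IsMinPath.eq_of_S_eq (hx : IsMinPath ω x) (hy : IsMinPath ω y) {n : ℕ}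
    (h : S x n = S y n) : ∀ k < n, x k = y k := by
  induction n with
  | zero => intro k hk; omega
  | succ n ih =>
    have hn : x n = y n := hx.apply_eq_of_S_succ_eq hy h
    rw [S_succ, S_succ, hn] at h
    intro k hk
    rcases Nat.lt_succ_iff_lt_or_eq.1 hk with hk | rfl
    · exact ih (by omega) k hk
    · exact hn

end MinPath

lemma tendsto_succ_mul_pow_of_lt_one {r : ℝ} (hr0 : 0 ≤ r) (hr1 : r < 1) :
    Tendsto (fun n : ℕ => ((n : ℝ) + 1) * r ^ n) atTop (nhds 0) := by
  simpa [add_mul] using (tendsto_self_mul_const_pow_of_lt_one hr0 hr1).add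
    (tendsto_pow_atTop_nhds_zero_of_lt_one hr0 hr1)

namespace IsBernoulli

variable {p : ℝ} {ν : Measure (ℕ → Bool)}

lemma measure_cylinder_le (hν : IsBernoulli p ν) (hp0 : 0 ≤ p) (hp1 : p ≤ 1) (n : ℕ)
    (w : ℕ → Bool) : ν {x | ∀ k < n, x k = w k} ≤ ENNReal.ofReal (max p (1 - p) ^ n) := by
  rw [hν n w]
  refine ENNReal.ofReal_le_ofReal ?_
  calc p ^ S w n * (1 - p) ^ (n - S w n)
      ≤ max p (1 - p) ^ S w n * max p (1 - p) ^ (n - S w n) := by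
        gcongr
        exacts [le_max_left _ _, le_max_right _ _]
    _ = max p (1 - p) ^ n := by rw [← pow_add, Nat.add_sub_cancel' (S_le w n)]

lemma measure_le_of_eq_of_S_eq (hν : IsBernoulli p ν) (hp0 : 0 ≤ p) (hp1 : p ≤ 1)
    {A : Set (ℕ → Bool)} {n : ℕ}
    (hA : ∀ x ∈ A, ∀ y ∈ A, S x n = S y n → ∀ k < n, x k = y k) :
    ν A ≤ ENNReal.ofReal ((n + 1) * max p (1 - p) ^ n) := by
  have hfiber : ∀ s, ν (A ∩ {x | S x n = s}) ≤ ENNReal.ofReal (max p (1 - p) ^ n) := by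
    intro s
    rcases (A ∩ {x | S x n = s}).eq_empty_or_nonempty with hempty | ⟨y, hyA, hys⟩
    · simp [hempty]
    · refine (measure_mono ?_).trans (hν.measure_cylinder_le hp0 hp1 n y)
      rintro x ⟨hxA, hxs⟩
      exact hA x hxA y hyA (hxs.trans hys.symm)
  calc ν A ≤ ν (⋃ s ∈ range (n + 1), A ∩ {x | S x n = s}) :=
        measure_mono fun x hx =>
          Set.mem_biUnion (mem_range.2 (Nat.lt_succ_of_le (S_le x n))) ⟨hx, rfl⟩
    _ ≤ ∑ s ∈ range (n + 1), ν (A ∩ {x | S x n = s}) := measure_biUnion_finset_le _ _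
    _ ≤ ∑ _s ∈ range (n + 1), ENNReal.ofReal (max p (1 - p) ^ n) :=
        sum_le_sum fun s _ => hfiber s
    _ = ENNReal.ofReal ((n + 1) * max p (1 - p) ^ n) := by
        rw [← ENNReal.ofReal_sum_of_nonneg fun _ _ => by positivity]
        simp

lemma measure_eq_zero_of_eq_of_S_eq (hν : IsBernoulli p ν) (hp : p ∈ Set.Ioo (0 : ℝ) 1)
    {A : Set (ℕ → Bool)}
    (hA : ∀ n, ∀ x ∈ A, ∀ y ∈ A, S x n = S y n → ∀ k < n, x k = y k) :
    ν A = 0 := by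
  obtain ⟨hp0, hp1⟩ := hp
  have hlim := ENNReal.tendsto_ofReal <| tendsto_succ_mul_pow_of_lt_one
    (le_max_of_le_left hp0.le) (max_lt hp1 (by linarith : 1 - p < 1))
  rw [ENNReal.ofReal_zero] at hlim
  exact nonpos_iff_eq_zero.1 <| ge_of_tendsto' hlim fun n =>
    hν.measure_le_of_eq_of_S_eq hp0.le hp1.le (hA n)

end IsBernoulli

/-- for every order `ω` on the Pascal-Bratteli diagram and every `p ∈ (0,1)`,
the sets of minimal and maximal infinite paths are `ν_p`-null. -/
theorem pascal_min_max_null (ω : ℕ × ℕ → Bool) (p : ℝ) (hp : p ∈ Set.Ioo (0 : ℝ) 1)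
    (ν : Measure (ℕ → Bool)) (hν : IsBernoulli p ν) :
    ν {x : ℕ → Bool | IsMinPath ω x} = 0 ∧ ν {x : ℕ → Bool | IsMaxPath ω x} = 0 :=
  ⟨hν.measure_eq_zero_of_eq_of_S_eq hp fun _ _ hx _ hy => IsMinPath.eq_of_S_eq hx hy,
    hν.measure_eq_zero_of_eq_of_S_eq hp fun _ _ hx _ hy =>
      hx.isMinPath_not.eq_of_S_eq hy.isMinPath_not⟩
end

section
/- There exists an order ω on the two-sided stationary generalized Pascal-Bratteli diagram B̃ such that both the set of ω-minimal infinite paths and the set of ω-maximal infinite paths in X_B̃ have the cardinality of the continuum (2^ℵ₀). -/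
/-- An infinite path in the two-sided stationary generalized Pascal-Bratteli diagram `B̃`. -/
def IsPathZ (v : ℕ → ℤ) : Prop :=
  ∀ n, v (n + 1) = v n ∨ v (n + 1) = v n + 1

/-- The path `v` is minimal for the order `ω`. -/
def MinPathZ (ω : ℤ × ℕ → Bool) (v : ℕ → ℤ) : Prop :=
  ∀ n : ℕ, v (n + 1) - v n = (if ω (v (n + 1), n + 1) then 1 else 0)

/-- The path `v` is maximal for the order `ω`. -/
def MaxPathZ (ω : ℤ × ℕ → Bool) (v : ℕ → ℤ) : Prop :=
  ∀ n : ℕ, v (n + 1) - v n = (if ω (v (n + 1), n + 1) then 0 else 1)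

/-!
A path is minimal for an order exactly when it enters every vertex through that vertex's minimal
edge. So if, in a family of paths, any two paths meeting at a vertex arrived there along the same
edge, one order makes all of them minimal, and it can at the same time make maximal a second such
family that meets the first nowhere.

The first family is a binary tree of slow paths, one for each `x : ℕ → Bool`: levels are cut into
blocks of length `2 ^ (j + 2)`, and during block `j` the path of `x` climbs from the binary value
of `x 0, …, x (j - 1)` to that of `x 0, …, x j` and then waits. At level `n` the path is at
most `(n + 2) / 2`, so the reflected paths `n + 3 - v n` form a second family disjoint from the
first.
-/

namespace PascalBratteli

lemma minPathZ_iff {ω : ℤ × ℕ → Bool} {v : ℕ → ℤ} (hv : IsPathZ v) :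
    MinPathZ ω v ↔ ∀ n, (ω (v (n + 1), n + 1) ↔ v (n + 1) = v n + 1) := by
  refine forall_congr' fun n => ?_
  rcases hv n with h | h <;> cases ω (v (n + 1), n + 1) <;>
    simp only [Bool.false_eq_true, ↓reduceIte, false_iff, true_iff] <;> omega

lemma maxPathZ_iff {ω : ℤ × ℕ → Bool} {v : ℕ → ℤ} (hv : IsPathZ v) :
    MaxPathZ ω v ↔ ∀ n, (ω (v (n + 1), n + 1) ↔ v (n + 1) = v n) := by
  refine forall_congr' fun n => ?_
  rcases hv n with h | h <;> cases ω (v (n + 1), n + 1) <;>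
    simp only [Bool.false_eq_true, ↓reduceIte, false_iff, true_iff] <;> omega

/-- Paths of the family that meet at a vertex arrive there along the same edge. -/
def BackwardDeterministic {ι α : Type*} (F : ι → ℕ → α) : Prop :=
  ∀ x y n, F x (n + 1) = F y (n + 1) → F x n = F y n

lemma BackwardDeterministic.map {ι α β : Type*} {F : ι → ℕ → α}
    (hF : BackwardDeterministic F) (g : ℕ → α → β) (hg : ∀ n, Function.Injective (g n)) :
    BackwardDeterministic fun x n => g n (F x n) :=
  fun x y n h => congrArg (g n) (hF x y n (hg _ h))

/-- The order declares an edge minimal when a path of `F` uses it, maximal when a path of `G`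
uses it; backward determinism and disjointness make this well defined. -/
theorem exists_order_minPathZ_maxPathZ {ι κ : Type*} {F : ι → ℕ → ℤ} {G : κ → ℕ → ℤ}
    (hFpath : ∀ x, IsPathZ (F x)) (hGpath : ∀ y, IsPathZ (G y))
    (hF : BackwardDeterministic F) (hG : BackwardDeterministic G)
    (hFG : ∀ x y n, F x (n + 1) ≠ G y (n + 1)) :
    ∃ ω : ℤ × ℕ → Bool, (∀ x, MinPathZ ω (F x)) ∧ ∀ y, MaxPathZ ω (G y) := by
  classical
  refine ⟨fun p => decide ((∃ x n, (F x (n + 1), n + 1) = p ∧ F x (n + 1) = F x n + 1) ∨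
      ∃ y n, (G y (n + 1), n + 1) = p ∧ G y (n + 1) = G y n), fun x => ?_, fun y => ?_⟩
  · refine (minPathZ_iff (hFpath x)).2 fun n => ?_
    simp only [decide_eq_true_iff, Prod.mk.injEq, add_left_inj]
    refine ⟨?_, fun h => Or.inl ⟨x, n, ⟨rfl, rfl⟩, h⟩⟩
    rintro (⟨z, m, ⟨hz, rfl⟩, hstep⟩ | ⟨z, m, ⟨hz, rfl⟩, -⟩)
    · rw [← hz, hstep, hF z x m hz]
    · exact absurd hz.symm (hFG x z m)
  · refine (maxPathZ_iff (hGpath y)).2 fun n => ?_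
    simp only [decide_eq_true_iff, Prod.mk.injEq, add_left_inj]
    refine ⟨?_, fun h => Or.inr ⟨y, n, ⟨rfl, rfl⟩, h⟩⟩
    rintro (⟨z, m, ⟨hz, rfl⟩, -⟩ | ⟨z, m, ⟨hz, rfl⟩, hstay⟩)
    · exact absurd hz (hFG z y m)
    · rw [← hz, hstay, hG z y m hz]

def prefixValue (x : ℕ → Bool) : ℕ → ℕ
  | 0 => 0
  | j + 1 => 2 * prefixValue x j + (x j).toNat

lemma prefixValue_succ (x : ℕ → Bool) (j : ℕ) :
    prefixValue x (j + 1) = 2 * prefixValue x j + (x j).toNat := rfl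

lemma prefixValue_lt (x : ℕ → Bool) (j : ℕ) : prefixValue x j < 2 ^ j := by
  induction j with
  | zero => simp [prefixValue]
  | succ j ih => rw [prefixValue_succ, pow_succ]; have := (x j).toNat_le; omega

lemma prefixValue_injective : Function.Injective prefixValue := by
  intro x y h
  funext j
  have hj := congrFun h (j + 1)
  rw [prefixValue_succ, prefixValue_succ, congrFun h j] at hj
  cases hx : x j <;> cases hy : y j <;> simp_all

/-- Block `j` consists of the levels `blockStart j ≤ n < blockStart (j + 1)`; it has length
`2 ^ (j + 2)`. -/
def blockStart (j : ℕ) : ℕ := 2 ^ (j + 2) - 4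

def block (n : ℕ) : ℕ := Nat.log 2 (n + 4) - 2

lemma blockStart_add_four (j : ℕ) : blockStart j + 4 = 2 ^ (j + 2) := by
  have : 2 ^ 2 ≤ 2 ^ (j + 2) := Nat.pow_le_pow_right two_pos (by omega)
  unfold blockStart; omega

lemma blockStart_succ (j : ℕ) : blockStart (j + 1) + 4 = 2 * (blockStart j + 4) := by
  rw [blockStart_add_four, blockStart_add_four, pow_succ, mul_comm]

lemma block_eq {j n : ℕ} (h₁ : blockStart j ≤ n) (h₂ : n < blockStart (j + 1)) :
    block n = j := by
  have := blockStart_add_four j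
  have := blockStart_succ j
  rw [block, Nat.log_eq_of_pow_le_of_lt_pow (m := j + 2) (by omega) (by rw [pow_succ]; omega)]
  rfl

lemma mem_block (n : ℕ) : blockStart (block n) ≤ n ∧ n < blockStart (block n + 1) := by
  have h₁ := Nat.pow_log_le_self 2 (x := n + 4) (by omega)
  have h₂ := Nat.lt_pow_succ_log_self one_lt_two (n + 4)
  have h₃ : 2 ≤ Nat.log 2 (n + 4) := Nat.le_log_of_pow_le one_lt_two (by omega)
  have h₄ := blockStart_add_four (block n)
  have := blockStart_succ (block n)
  rw [show block n + 2 = Nat.log 2 (n + 4) by unfold block; omega] at h₄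
  rw [Nat.pow_succ] at h₂
  constructor <;> omega

/-- During block `j` the path climbs from `prefixValue x j` to `prefixValue x (j + 1)` and then
waits. -/
def slowPath (x : ℕ → Bool) (n : ℕ) : ℕ :=
  min (prefixValue x (block n) + (n - blockStart (block n))) (prefixValue x (block n + 1))

lemma slowPath_eq (x : ℕ → Bool) {j n : ℕ} (h₁ : blockStart j ≤ n) (h₂ : n ≤ blockStart (j + 1)) :
    slowPath x n = min (prefixValue x j + (n - blockStart j)) (prefixValue x (j + 1)) := by
  rcases h₂.lt_or_eq with h₂ | rfl
  · rw [slowPath, block_eq h₁ h₂]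
  have := blockStart_succ j
  rw [slowPath, block_eq le_rfl (by have := blockStart_succ (j + 1); omega)]
  -- the climb of block `j` is at most `2 ^ j`, so it is over before the block ends
  have := prefixValue_lt x j
  have := blockStart_add_four j
  have : 2 ^ (j + 2) = 4 * 2 ^ j := by ring
  have := prefixValue_succ x j
  have := prefixValue_succ x (j + 1)
  have := (x j).toNat_le
  omega

lemma slowPath_blockStart (x : ℕ → Bool) (j : ℕ) : slowPath x (blockStart j) = prefixValue x j := by
  rw [slowPath_eq x le_rfl (by have := blockStart_succ j; omega), prefixValue_succ]
  omega

lemma slowPath_injective : Function.Injective slowPath := by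
  intro x y h
  apply prefixValue_injective
  funext j
  rw [← slowPath_blockStart, ← slowPath_blockStart, h]

lemma slowPath_succ (x : ℕ → Bool) (n : ℕ) :
    slowPath x (n + 1) = min (prefixValue x (block n) + (n - blockStart (block n) + 1))
      (prefixValue x (block n + 1)) := by
  obtain ⟨h₁, h₂⟩ := mem_block n
  rw [slowPath_eq x (j := block n) (by omega) h₂]
  omega

lemma slowPath_succ_eq_or (x : ℕ → Bool) (n : ℕ) :
    slowPath x (n + 1) = slowPath x n ∨ slowPath x (n + 1) = slowPath x n + 1 := by
  rw [slowPath_succ, slowPath]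
  omega

/-- Paths with distinct prefixes of length `j + 1` stay apart during block `j`, because
`prefixValue` is monotone in the earlier prefix and the targets of its two extensions are
adjacent. -/
lemma backwardDeterministic_slowPath : BackwardDeterministic slowPath := by
  intro x y n h
  rw [slowPath_succ, slowPath_succ, prefixValue_succ, prefixValue_succ] at h
  rw [slowPath, slowPath, prefixValue_succ, prefixValue_succ]
  have := (x (block n)).toNat_le
  have := (y (block n)).toNat_le
  omega

lemma two_mul_slowPath_le (x : ℕ → Bool) (n : ℕ) : 2 * slowPath x n ≤ n + 2 := by
  have := (mem_block n).1
  have := prefixValue_lt x (block n)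
  have := blockStart_add_four (block n)
  have : 2 ^ (block n + 2) = 4 * 2 ^ block n := by ring
  have := (x (block n)).toNat_le
  rw [slowPath, prefixValue_succ]
  omega

/-- The shift by `3` keeps fast paths off the slow ones, by `two_mul_slowPath_le`. -/
def fastPath (x : ℕ → Bool) (n : ℕ) : ℤ := n + 3 - slowPath x n

lemma isPathZ_slowPath (x : ℕ → Bool) : IsPathZ fun n => (slowPath x n : ℤ) := by
  intro n
  rcases slowPath_succ_eq_or x n with h | h <;> simp [h]

lemma isPathZ_fastPath (x : ℕ → Bool) : IsPathZ (fastPath x) := by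
  intro n
  rcases slowPath_succ_eq_or x n with h | h <;> simp only [fastPath, h] <;> push_cast <;> omega

lemma backwardDeterministic_fastPath : BackwardDeterministic fastPath :=
  backwardDeterministic_slowPath.map (fun n a => (n : ℤ) + 3 - a)
    fun _ => sub_right_injective.comp Nat.cast_injective

lemma fastPath_ne_slowPath (x y : ℕ → Bool) (n : ℕ) : fastPath x n ≠ slowPath y n := by
  have := two_mul_slowPath_le x n
  have := two_mul_slowPath_le y n
  unfold fastPath
  omega

lemma fastPath_injective : Function.Injective fastPath := by
  intro x y h
  apply slowPath_injective
  funext n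
  have := congrFun h n
  unfold fastPath at this
  omega

lemma mk_setOf_eq_continuum {P : (ℕ → ℤ) → Prop} {f : (ℕ → Bool) → ℕ → ℤ}
    (hf : Function.Injective f) (hP : ∀ x, P (f x)) :
    Cardinal.mk {v | P v} = Cardinal.continuum := by
  refine le_antisymm ((Cardinal.mk_set_le _).trans (by simp)) ?_
  calc Cardinal.continuum = Cardinal.mk (ℕ → Bool) := by simp
    _ ≤ _ := Cardinal.mk_le_of_injective (f := fun x => (⟨f x, hP x⟩ : {v | P v}))
      fun _ _ h => hf (congrArg Subtype.val h)

end PascalBratteli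

open PascalBratteli

/-- there is an order on `B̃` with continuum many minimal infinite paths and
continuum many maximal infinite paths. -/
theorem two_sided_order_continuum_min_max :
    ∃ ω : ℤ × ℕ → Bool,
      Cardinal.mk {v : ℕ → ℤ | IsPathZ v ∧ MinPathZ ω v} = Cardinal.continuum ∧
      Cardinal.mk {v : ℕ → ℤ | IsPathZ v ∧ MaxPathZ ω v} = Cardinal.continuum := by
  obtain ⟨ω, hmin, hmax⟩ := exists_order_minPathZ_maxPathZ isPathZ_fastPath isPathZ_slowPath
    backwardDeterministic_fastPath (backwardDeterministic_slowPath.map (fun _ a => (a : ℤ))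
      fun _ => Nat.cast_injective) fun x y n => fastPath_ne_slowPath x y (n + 1)
  refine ⟨ω, mk_setOf_eq_continuum fastPath_injective fun x => ⟨isPathZ_fastPath x, hmin x⟩,
    mk_setOf_eq_continuum (f := fun x n => (slowPath x n : ℤ)) ?_
      fun x => ⟨isPathZ_slowPath x, hmax x⟩⟩
  exact Nat.cast_injective.comp_left.comp slowPath_injective
end
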